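/- Let H be a real Hilbert space, F : H → ℝ differentiable with β-Lipschitz gradient for some β > 0, K ⊆ H a nonempty closed convex set, x ∈ K, g ∈ H, and x⁺ = proj_K(x − (1/β) g). Then ‖x⁺ − x‖² ≤ (4/β²) ‖∇F(x) − g‖² + (4/β) (F(x) − F(x⁺)). -/

import Mathlib

/-!
The projection onto a convex set satisfies the variational inequality, which for
`x⁺ = proj_K(x - g/β)` tested against `x ∈ K` gives `β‖x⁺ - x‖² ≤ ⟪g, x - x⁺⟫`. Adding this to the
descent lemma `F x⁺ ≤ F x + ⟪∇F x, x⁺ - x⟫ + (β/2)‖x⁺ - x‖²` and applying Cauchy–Schwarz to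
`⟪∇F x - g, x⁺ - x⟫` leaves `(β/2)‖x⁺ - x‖² ≤ ‖∇F x - g‖‖x⁺ - x‖ + (F x - F x⁺)`, a quadratic
inequality in `‖x⁺ - x‖` which yields the bound.
-/

open scoped RealInnerProductSpace

/-- `q` is the metric projection of `p` onto the set `K`: `q ∈ K` and `q` is a closest
point of `K` to `p`. -/
def IsProjOn {H : Type*} [NormedAddCommGroup H] (K : Set H) (p q : H) : Prop :=
  q ∈ K ∧ ∀ y ∈ K, ‖p - q‖ ≤ ‖p - y‖

section Projection

variable {H : Type*} [NormedAddCommGroup H] {K : Set H} {p q : H}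

theorem IsProjOn.norm_sub_eq_iInf (h : IsProjOn K p q) : ‖p - q‖ = ⨅ w : K, ‖p - w‖ := by
  have : Nonempty K := ⟨⟨q, h.1⟩⟩
  refine le_antisymm (le_ciInf fun w => h.2 w w.2) ?_
  exact ciInf_le ⟨0, fun _ ⟨w, hw⟩ => hw ▸ norm_nonneg _⟩ (⟨q, h.1⟩ : K)

variable [InnerProductSpace ℝ H]

theorem IsProjOn.inner_sub_le_zero (hK : Convex ℝ K) (h : IsProjOn K p q) {y : H} (hy : y ∈ K) :
    ⟪p - q, y - q⟫ ≤ 0 :=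
  (norm_eq_iInf_iff_real_inner_le_zero hK h.1).mp h.norm_sub_eq_iInf y hy

theorem IsProjOn.norm_sub_sq_le_inner_of_sub_smul (hK : Convex ℝ K) {x g : H} (hx : x ∈ K)
    {c : ℝ} (h : IsProjOn K (x - c • g) q) : ‖q - x‖ ^ 2 ≤ c * ⟪g, x - q⟫ := by
  have hvi := h.inner_sub_le_zero hK hx
  rw [sub_right_comm, inner_sub_left, real_inner_smul_left, real_inner_self_eq_norm_sq,
    norm_sub_rev] at hvi
  linarith

end Projection

section Descent

variable {H : Type*} [NormedAddCommGroup H] [InnerProductSpace ℝ H] [CompleteSpace H]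
  {F : H → ℝ} {F' : H → H}

theorem HasGradientAt.hasDerivAt_comp_add_smul {x d : H} {t : ℝ}
    (hF : HasGradientAt F (F' (x + t • d)) (x + t • d)) :
    HasDerivAt (fun s : ℝ => F (x + s • d)) ⟪F' (x + t • d), d⟫ t := by
  have hline : HasDerivAt (fun s : ℝ => x + s • d) d t := by
    simpa using ((hasDerivAt_id t).smul_const d).const_add x
  have hcomp := (hasGradientAt_iff_hasFDerivAt.mp hF).comp_hasDerivAt t hline
  simp only [InnerProductSpace.toDual_apply_apply] at hcomp
  exact hcomp

/-- The descent lemma. -/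
theorem le_add_inner_add_of_lipschitzWith_gradient (hF : ∀ x, HasGradientAt F (F' x) x)
    {L : NNReal} (hlip : LipschitzWith L F') (x y : H) :
    F y ≤ F x + ⟪F' x, y - x⟫ + L / 2 * ‖y - x‖ ^ 2 := by
  set d := y - x
  -- `ψ 1 ≤ ψ 0` is the claim, and it holds because `ψ' ≤ 0` by the Lipschitz bound on `F'`.
  set ψ : ℝ → ℝ := fun t => F (x + t • d) - t * ⟪F' x, d⟫ - L / 2 * ‖d‖ ^ 2 * t ^ 2
  have hψ' (t : ℝ) :
      HasDerivAt ψ (⟪F' (x + t • d), d⟫ - ⟪F' x, d⟫ - L / 2 * ‖d‖ ^ 2 * (2 * t)) t := by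
    refine ((hF _).hasDerivAt_comp_add_smul.sub ?_).sub ?_
    · simpa using (hasDerivAt_id t).mul_const ⟪F' x, d⟫
    · simpa using (hasDerivAt_pow 2 t).const_mul (L / 2 * ‖d‖ ^ 2)
  have hψ'_nonpos {t : ℝ} (ht : 0 < t) :
      ⟪F' (x + t • d), d⟫ - ⟪F' x, d⟫ - L / 2 * ‖d‖ ^ 2 * (2 * t) ≤ 0 := by
    refine sub_nonpos.mpr ?_
    have hgrad : ‖F' (x + t • d) - F' x‖ ≤ L * (t * ‖d‖) := by
      simpa [dist_eq_norm, norm_smul, abs_of_pos ht] using hlip.dist_le_mul (x + t • d) x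
    calc ⟪F' (x + t • d), d⟫ - ⟪F' x, d⟫ = ⟪F' (x + t • d) - F' x, d⟫ := (inner_sub_left ..).symm
      _ ≤ ‖F' (x + t • d) - F' x‖ * ‖d‖ := real_inner_le_norm _ _
      _ ≤ L * (t * ‖d‖) * ‖d‖ := by gcongr
      _ = L / 2 * ‖d‖ ^ 2 * (2 * t) := by ring
  have hanti : AntitoneOn ψ (Set.Icc 0 1) := by
    refine antitoneOn_of_deriv_nonpos (convex_Icc 0 1)
      (fun t _ => (hψ' t).continuousAt.continuousWithinAt)
      (fun t _ => (hψ' t).differentiableAt.differentiableWithinAt) fun t ht => ?_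
    rw [interior_Icc] at ht
    exact (hψ' t).deriv ▸ hψ'_nonpos ht.1
  have h01 : ψ 1 ≤ ψ 0 := hanti (by simp) (by simp) zero_le_one
  simp only [ψ, d, one_smul, zero_smul, add_zero, add_sub_cancel] at h01
  linarith

end Descent

theorem sq_le_of_mul_sq_le_mul_add {β a t D : ℝ} (hβ : 0 < β) (h : β / 2 * t ^ 2 ≤ a * t + D) :
    t ^ 2 ≤ 4 / β ^ 2 * a ^ 2 + 4 / β * D := by
  have hamgm : a * t ≤ a ^ 2 / β + β / 4 * t ^ 2 := by
    have : a ^ 2 / β + β / 4 * t ^ 2 - a * t = (a - β * t / 2) ^ 2 / β := by field_simp; ring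
    linarith [div_nonneg (sq_nonneg (a - β * t / 2)) hβ.le]
  calc t ^ 2 = 4 / β * (β / 4 * t ^ 2) := by field_simp
    _ ≤ 4 / β * (a ^ 2 / β + D) := by gcongr; linarith
    _ = 4 / β ^ 2 * a ^ 2 + 4 / β * D := by ring

theorem inexact_projected_gradient_step_bound_general
    {H : Type*} [NormedAddCommGroup H] [InnerProductSpace ℝ H] [CompleteSpace H]
    (F : H → ℝ) (F' : H → H) (hF : ∀ x, HasGradientAt F (F' x) x)
    (β : ℝ) (hβ : 0 < β) (hlip : LipschitzWith β.toNNReal F')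
    (K : Set H) (hKconv : Convex ℝ K)
    (x : H) (hx : x ∈ K) (g : H) (xp : H)
    (hproj : IsProjOn K (x - (1 / β) • g) xp) :
    ‖xp - x‖ ^ 2 ≤ (4 / β ^ 2) * ‖F' x - g‖ ^ 2 + (4 / β) * (F x - F xp) := by
  have hdescent := le_add_inner_add_of_lipschitzWith_gradient hF hlip x xp
  rw [Real.coe_toNNReal β hβ.le] at hdescent
  have hproj_step : β * ‖xp - x‖ ^ 2 ≤ ⟪g, x - xp⟫ := by
    have := mul_le_mul_of_nonneg_left
      (hproj.norm_sub_sq_le_inner_of_sub_smul hKconv hx) hβ.le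
    rwa [← mul_assoc, mul_one_div_cancel hβ.ne', one_mul] at this
  have hsplit : ⟪F' x, xp - x⟫ = ⟪F' x - g, xp - x⟫ - ⟪g, x - xp⟫ := by
    rw [inner_sub_left, ← neg_sub x xp, inner_neg_right, inner_neg_right]; ring
  have hcs : ⟪F' x - g, xp - x⟫ ≤ ‖F' x - g‖ * ‖xp - x‖ := real_inner_le_norm _ _
  exact sq_le_of_mul_sq_le_mul_add hβ (by linarith)

/-- Step-size bound for one inexact projected gradient step: if `∇F` is `β`-Lipschitz,
`x ∈ K`, and `x⁺ = proj_K(x - (1/β) g)`, then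
`‖x⁺ - x‖² ≤ (4/β²)‖∇F(x) - g‖² + (4/β)(F(x) - F(x⁺))`. -/
theorem inexact_projected_gradient_step_bound
    {H : Type*} [NormedAddCommGroup H] [InnerProductSpace ℝ H] [CompleteSpace H]
    (F : H → ℝ) (F' : H → H) (hF : ∀ x, HasGradientAt F (F' x) x)
    (β : ℝ) (hβ : 0 < β) (hlip : LipschitzWith β.toNNReal F')
    (K : Set H) (hKne : K.Nonempty) (hKc : IsClosed K) (hKconv : Convex ℝ K)
    (x : H) (hx : x ∈ K) (g : H) (xp : H)
    (hproj : IsProjOn K (x - (1 / β) • g) xp) :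
    ‖xp - x‖ ^ 2 ≤ (4 / β ^ 2) * ‖F' x - g‖ ^ 2 + (4 / β) * (F x - F xp) :=
  inexact_projected_gradient_step_bound_general F F' hF β hβ hlip K hKconv x hx g xp hproj
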